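/- (Equation (BNZ)) For every GPOVM M and all g g' : G, D_pt (M_g) g' = D_pt M (g * g'), where the risks of the twisted GPOVM M_g are defined through the measures ν (M_g) g' in the same way as for M. -/

import Mathlib

open MeasureTheory
open scoped Kronecker Matrix ComplexOrder

noncomputable section

namespace GroupEstimation

variable {G : Type} [Group G] [TopologicalSpace G] [IsTopologicalGroup G]
  [CompactSpace G] [T2Space G] [MeasurableSpace G] [BorelSpace G]

/-- Vectorization of a square matrix. -/
def vec {d : ℕ} (A : Matrix (Fin d) (Fin d) ℂ) : EuclideanSpace ℂ (Fin d × Fin d) :=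
  WithLp.toLp 2 (fun p => A p.1 p.2)

/-- The rank-one state `|f(g)⟩⟩⟨⟨f(g)|`. -/
def rho {d : ℕ} (f : G → Matrix (Fin d) (Fin d) ℂ) (g : G) :
    Matrix (Fin d × Fin d) (Fin d × Fin d) ℂ :=
  fun p q => f g p.1 p.2 * star (f g q.1 q.2)

/-- `A g = f g ⊗ₖ 1`. -/
def Amat {d : ℕ} (f : G → Matrix (Fin d) (Fin d) ℂ) (g : G) :
    Matrix (Fin d × Fin d) (Fin d × Fin d) ℂ :=
  f g ⊗ₖ (1 : Matrix (Fin d) (Fin d) ℂ)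

/-- The average state `ρμ` (entrywise Bochner integral). -/
def rhoMu (μ : Measure G) {d : ℕ} (f : G → Matrix (Fin d) (Fin d) ℂ) :
    Matrix (Fin d × Fin d) (Fin d × Fin d) ℂ :=
  fun p q => ∫ g, rho f g p q ∂μ

/-- positivity, vanishing at ∅ and countable additivity (the "measure part" of a GPOVM). -/
def IsPreGPOVM {d : ℕ} (M : Set G → Matrix (Fin d × Fin d) (Fin d × Fin d) ℂ) : Prop :=
  (∀ B : Set G, MeasurableSet B → (M B).PosSemidef) ∧ M ∅ = 0 ∧
    ∀ B : ℕ → Set G, (∀ j, MeasurableSet (B j)) → Pairwise (Function.onFun Disjoint B) →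
      M (⋃ j, B j) = ∑' j, M (B j)

/-- Generalized POVM. -/
def IsGPOVM (μ : Measure G) {d : ℕ} (f : G → Matrix (Fin d) (Fin d) ℂ)
    (M : Set G → Matrix (Fin d × Fin d) (Fin d × Fin d) ℂ) : Prop :=
  IsPreGPOVM M ∧ (M Set.univ * rhoMu μ f).trace = 1

/-- Covariance of a GPOVM. -/
def IsCovariant {d : ℕ} (f : G → Matrix (Fin d) (Fin d) ℂ)
    (M : Set G → Matrix (Fin d × Fin d) (Fin d × Fin d) ℂ) : Prop :=
  ∀ (g : G) (B : Set G), MeasurableSet B →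
    M ((g * ·) '' B) = Amat f g * M B * (Amat f g)ᴴ

/-- The covariant GPOVM with seed `T`. -/
def MT (μ : Measure G) {d : ℕ} (f : G → Matrix (Fin d) (Fin d) ℂ)
    (T : Matrix (Fin d × Fin d) (Fin d × Fin d) ℂ) (B : Set G) :
    Matrix (Fin d × Fin d) (Fin d × Fin d) ℂ :=
  fun p q => ∫ g in B, (Amat f g * T * (Amat f g)ᴴ) p q ∂μ

/-- Pointwise risk. -/
def Dpt {d : ℕ} (w : G → G → ℝ)
    (ν : (Set G → Matrix (Fin d × Fin d) (Fin d × Fin d) ℂ) → G → Measure G)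
    (M : Set G → Matrix (Fin d × Fin d) (Fin d × Fin d) ℂ) (g : G) : ℝ :=
  ∫ gh, w g gh ∂(ν M g)

/-- Bayes risk. -/
def Dbayes (μ : Measure G) {d : ℕ} (w : G → G → ℝ)
    (ν : (Set G → Matrix (Fin d × Fin d) (Fin d × Fin d) ℂ) → G → Measure G)
    (M : Set G → Matrix (Fin d × Fin d) (Fin d × Fin d) ℂ) : ℝ :=
  ∫ g, Dpt w ν M g ∂μ

/-- Minimax risk. -/
def Dmax {d : ℕ} (w : G → G → ℝ)
    (ν : (Set G → Matrix (Fin d × Fin d) (Fin d × Fin d) ℂ) → G → Measure G)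
    (M : Set G → Matrix (Fin d × Fin d) (Fin d × Fin d) ℂ) : ℝ :=
  ⨆ g : G, Dpt w ν M g

/-- Twisted GPOVM `M_g`. -/
def twist {d : ℕ} (f : G → Matrix (Fin d) (Fin d) ℂ)
    (M : Set G → Matrix (Fin d × Fin d) (Fin d × Fin d) ℂ) (g : G) (B : Set G) :
    Matrix (Fin d × Fin d) (Fin d × Fin d) ℂ :=
  (Amat f g)ᴴ * M ((g * ·) '' B) * Amat f g

/-- Matrix of the orthogonal projection onto span {v g}. -/
def P0 {d : ℕ} (f : G → Matrix (Fin d) (Fin d) ℂ) :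
    Matrix (Fin d × Fin d) (Fin d × Fin d) ℂ :=
  Matrix.toEuclideanLin.symm
    ((Submodule.span ℂ (Set.range fun g => vec (f g))).subtype ∘ₗ
      (Submodule.orthogonalProjectionOnto (Submodule.span ℂ (Set.range fun g => vec (f g)))).toLinearMap)

end GroupEstimation

end

/-!
Conjugation by `A g = f g ⊗ₖ 1` sends the state `ρ g'` to `ρ (g * g')`: it maps `vec (f g')` to
`vec (f g * f g')`, which is `vec (f (g * g'))` up to the phase `c g g'`, and the phase cancels in the
rank-one projector. By cyclicity of the trace, the outcome law of the twisted measurement at `g'`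
is therefore that of `M` at `g * g'`, translated by `g⁻¹`; invariance of `w` under left
translations turns this into the equality of risks.
-/

namespace Matrix

variable {n : Type*}

theorem vecMulVec_smul_star_smul {𝕜 : Type*} [RCLike 𝕜] {a : 𝕜} (ha : ‖a‖ = 1) (x : n → 𝕜) :
    vecMulVec (a • x) (star (a • x)) = vecMulVec x (star x) := by
  have hphase : a * star a = 1 := by
    rw [RCLike.star_def, RCLike.mul_conj, ha]
    norm_num
  ext i j
  simp only [vecMulVec_apply, Pi.smul_apply, Pi.star_apply, smul_eq_mul, star_mul']
  linear_combination (x i * star (x j)) * hphase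

variable [Fintype n]

theorem trace_conjTranspose_mul_mul_mul {R : Type*} [CommSemiring R] [StarRing R]
    (U M Q : Matrix n n R) : (Uᴴ * M * U * Q).trace = (M * (U * Q * Uᴴ)).trace := by
  rw [show Uᴴ * M * U * Q = Uᴴ * (M * U * Q) by simp only [Matrix.mul_assoc], trace_mul_comm]
  simp only [Matrix.mul_assoc]

variable [DecidableEq n]

theorem kronecker_one_mulVec {R : Type*} [CommSemiring R] (A X : Matrix n n R) :
    (A ⊗ₖ (1 : Matrix n n R)) *ᵥ (fun p => X p.1 p.2) = fun p => (A * X) p.1 p.2 := by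
  ext ⟨i, j⟩
  simp [mulVec, dotProduct, kroneckerMap_apply, one_apply, Fintype.sum_prod_type, mul_apply]

/-- Unitarity makes conjugation a linear homeomorphism, so it commutes with `tsum` even when the
family is not summable. -/
theorem conjTranspose_mul_tsum_mul {𝕜 ι : Type*} [RCLike 𝕜] {U : Matrix n n 𝕜}
    (hU : U ∈ unitaryGroup n 𝕜) (X : ι → Matrix n n 𝕜) :
    Uᴴ * (∑' j, X j) * U = ∑' j, Uᴴ * X j * U := by
  let e : Matrix n n 𝕜 ≃L[𝕜] Matrix n n 𝕜 :=
    (Unitary.conjStarAlgAut 𝕜 _ (star ⟨U, hU⟩)).toAlgEquiv.toLinearEquiv.toContinuousLinearEquiv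
  simpa [e, Matrix.star_eq_conjTranspose] using e.map_tsum (f := X)

end Matrix

namespace GroupEstimation

variable {G : Type} {d : ℕ} {f : G → Matrix (Fin d) (Fin d) ℂ}

theorem Amat_mem_unitaryGroup {g : G} (hfg : f g ∈ Matrix.unitaryGroup (Fin d) ℂ) :
    Amat f g ∈ Matrix.unitaryGroup (Fin d × Fin d) ℂ :=
  Matrix.kronecker_mem_unitary hfg (one_mem _)

theorem rho_eq_vecMulVec (g : G) :
    rho f g = Matrix.vecMulVec (fun p => f g p.1 p.2) (star fun p => f g p.1 p.2) :=
  rfl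

variable [Group G]

theorem Amat_mul_rho_mul_conjTranspose {c : G → G → ℂ} (hc_norm : ∀ g h : G, ‖c g h‖ = 1)
    (hc_proj : ∀ g h : G, f (g * h) = c g h • (f g * f h)) (g g' : G) :
    Amat f g * rho f g' * (Amat f g)ᴴ = rho f (g * g') := by
  have hphase : f g * f g' = star (c g g') • f (g * g') := by
    rw [hc_proj, smul_smul, RCLike.star_def, RCLike.conj_mul, hc_norm]
    norm_num
  rw [rho_eq_vecMulVec, Matrix.mul_vecMulVec, Matrix.vecMulVec_mul, ← Matrix.star_mulVec, Amat,
    Matrix.kronecker_one_mulVec, hphase]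
  exact Matrix.vecMulVec_smul_star_smul (by simp [hc_norm]) _

variable [MeasurableSpace G] [MeasurableMul G]

theorem isPreGPOVM_twist {M : Set G → Matrix (Fin d × Fin d) (Fin d × Fin d) ℂ}
    (hM : IsPreGPOVM M) {g : G} (hfg : f g ∈ Matrix.unitaryGroup (Fin d) ℂ) :
    IsPreGPOVM (twist f M g) := by
  obtain ⟨hpos, hempty, hadd⟩ := hM
  have himage {B : Set G} (hB : MeasurableSet B) : MeasurableSet ((g * ·) '' B) :=
    (measurableEmbedding_mulLeft g).measurableSet_image.mpr hB
  refine ⟨fun B hB => (hpos _ (himage hB)).conjTranspose_mul_mul_same _, by simp [twist, hempty],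
    fun B hB hdisj => ?_⟩
  have hdisj' : Pairwise (Function.onFun Disjoint fun j => (g * ·) '' B j) := fun i j hij =>
    Set.disjoint_image_of_injective (mul_right_injective g) (hdisj hij)
  rw [twist, Set.image_iUnion, hadd _ (fun j => himage (hB j)) hdisj',
    Matrix.conjTranspose_mul_tsum_mul (Amat_mem_unitaryGroup hfg)]
  rfl

theorem nu_twist_eq_map {ν : (Set G → Matrix (Fin d × Fin d) (Fin d × Fin d) ℂ) → G → Measure G}
    (hν : ∀ M : Set G → Matrix (Fin d × Fin d) (Fin d × Fin d) ℂ, IsPreGPOVM M →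
      ∀ (g : G) (B : Set G), MeasurableSet B →
        ν M g B = ENNReal.ofReal ((M B * rho f g).trace).re)
    {c : G → G → ℂ} (hc_norm : ∀ g h : G, ‖c g h‖ = 1)
    (hc_proj : ∀ g h : G, f (g * h) = c g h • (f g * f h))
    {M : Set G → Matrix (Fin d × Fin d) (Fin d × Fin d) ℂ} (hM : IsPreGPOVM M) {g : G}
    (hfg : f g ∈ Matrix.unitaryGroup (Fin d) ℂ) (g' : G) :
    ν (twist f M g) g' = (ν M (g * g')).map (g⁻¹ * ·) := by
  ext B hB
  rw [(measurableEmbedding_mulLeft g⁻¹).map_apply, ← Set.image_mul_left,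
    hν _ (isPreGPOVM_twist hM hfg) g' B hB,
    hν M hM _ _ ((measurableEmbedding_mulLeft g).measurableSet_image.mpr hB), twist,
    Matrix.trace_conjTranspose_mul_mul_mul, Amat_mul_rho_mul_conjTranspose hc_norm hc_proj]

theorem Dpt_twist_general
    {G : Type} [Group G] [TopologicalSpace G] [IsTopologicalGroup G]
    [MeasurableSpace G] [BorelSpace G]
    (μ : Measure G)
    {d : ℕ} (f : G → Matrix (Fin d) (Fin d) ℂ)
    (hf_unitary : ∀ g : G, f g ∈ Matrix.unitaryGroup (Fin d) ℂ)
    (c : G → G → ℂ) (hc_norm : ∀ g h : G, ‖c g h‖ = 1)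
    (hc_proj : ∀ g h : G, f (g * h) = c g h • (f g * f h))
    (w : G → G → ℝ)
    (hw_cov : ∀ g gh g' : G, w (g' * g) (g' * gh) = w g gh)
    (ν : (Set G → Matrix (Fin d × Fin d) (Fin d × Fin d) ℂ) → G → Measure G)
    (hν : ∀ M : Set G → Matrix (Fin d × Fin d) (Fin d × Fin d) ℂ, IsPreGPOVM M →
      ∀ (g : G) (B : Set G), MeasurableSet B →
        ν M g B = ENNReal.ofReal ((M B * rho f g).trace).re)
    (M : Set G → Matrix (Fin d × Fin d) (Fin d × Fin d) ℂ)
    (hM : IsGPOVM μ f M) (g g' : G) :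
    Dpt w ν (twist f M g) g' = Dpt w ν M (g * g') := by
  rw [Dpt, Dpt, nu_twist_eq_map hν hc_norm hc_proj hM.1 (hf_unitary g),
    (measurableEmbedding_mulLeft g⁻¹).integral_map]
  congr 1 with x
  simpa using (hw_cov g' (g⁻¹ * x) g).symm

/-- Equation (BNZ): the pointwise risk of the twisted GPOVM. -/
theorem Dpt_twist
    {G : Type} [Group G] [TopologicalSpace G] [IsTopologicalGroup G]
    [CompactSpace G] [T2Space G] [MeasurableSpace G] [BorelSpace G]
    (μ : Measure G) [μ.IsHaarMeasure] [IsProbabilityMeasure μ]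
    {d : ℕ} (hd : 0 < d) (f : G → Matrix (Fin d) (Fin d) ℂ)
    (hf_cont : Continuous f) (hf_one : f 1 = 1)
    (hf_unitary : ∀ g : G, f g ∈ Matrix.unitaryGroup (Fin d) ℂ)
    (c : G → G → ℂ) (hc_norm : ∀ g h : G, ‖c g h‖ = 1)
    (hc_proj : ∀ g h : G, f (g * h) = c g h • (f g * f h))
    (w : G → G → ℝ) (hw_cont : Continuous fun p : G × G => w p.1 p.2)
    (hw_bdd : ∃ C : ℝ, ∀ g gh : G, |w g gh| ≤ C)
    (hw_cov : ∀ g gh g' : G, w (g' * g) (g' * gh) = w g gh)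
    (ν : (Set G → Matrix (Fin d × Fin d) (Fin d × Fin d) ℂ) → G → Measure G)
    (hν : ∀ M : Set G → Matrix (Fin d × Fin d) (Fin d × Fin d) ℂ, IsPreGPOVM M →
      ∀ (g : G) (B : Set G), MeasurableSet B →
        ν M g B = ENNReal.ofReal ((M B * rho f g).trace).re)
    (M : Set G → Matrix (Fin d × Fin d) (Fin d × Fin d) ℂ)
    (hM : IsGPOVM μ f M) (g g' : G) :
    Dpt w ν (twist f M g) g' = Dpt w ν M (g * g') :=
  Dpt_twist_general μ f hf_unitary c hc_norm hc_proj w hw_cov ν hν M hM g g'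

end GroupEstimation
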